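/- Let C̄ = K̃ ⊕ g(X̄) where K̃ is a random variable on a finite abelian group G of size N, X̄ is a random variable independent of (K̃, M) with g an arbitrary function into G, and M another random variable. Then I(C̄; X̄ | M) ≤ log N − H(K̃ | M). -/

import Mathlib

open scoped BigOperators Classical
open Real

noncomputable section

/-- A probability mass function on a finite type. -/
def IsPmf {Ω : Type*} [Fintype Ω] (μ : Ω → ℝ) : Prop :=
  (∀ ω, 0 ≤ μ ω) ∧ ∑ ω, μ ω = 1

/-- Probability of an event. -/
def pr {Ω : Type*} [Fintype Ω] (μ : Ω → ℝ) (E : Ω → Prop) : ℝ :=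
  ∑ ω, if E ω then μ ω else 0

/-- Distribution of a random variable. -/
def dist {Ω A : Type*} [Fintype Ω] (μ : Ω → ℝ) (X : Ω → A) (a : A) : ℝ :=
  pr μ (fun ω => X ω = a)

/-- Shannon entropy (natural log) of a random variable. -/
def ent {Ω A : Type*} [Fintype Ω] [Fintype A] (μ : Ω → ℝ) (X : Ω → A) : ℝ :=
  -∑ a, dist μ X a * Real.log (dist μ X a)

/-- Conditional entropy H(X|Y). -/
def condEnt {Ω A B : Type*} [Fintype Ω] [Fintype A] [Fintype B]
    (μ : Ω → ℝ) (X : Ω → A) (Y : Ω → B) : ℝ :=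
  ent μ (fun ω => (X ω, Y ω)) - ent μ Y

/-- Mutual information I(X;Y). -/
def mutInfo {Ω A B : Type*} [Fintype Ω] [Fintype A] [Fintype B]
    (μ : Ω → ℝ) (X : Ω → A) (Y : Ω → B) : ℝ :=
  ent μ X + ent μ Y - ent μ (fun ω => (X ω, Y ω))

/-- Conditional mutual information I(X;Y|Z). -/
def condMutInfo {Ω A B C : Type*} [Fintype Ω] [Fintype A] [Fintype B] [Fintype C]
    (μ : Ω → ℝ) (X : Ω → A) (Y : Ω → B) (Z : Ω → C) : ℝ :=
  ent μ (fun ω => (X ω, Z ω)) + ent μ (fun ω => (Y ω, Z ω))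
    - ent μ (fun ω => (X ω, Y ω, Z ω)) - ent μ Z

/-- Independence of two random variables. -/
def Indep {Ω A B : Type*} [Fintype Ω] (μ : Ω → ℝ) (X : Ω → A) (Y : Ω → B) : Prop :=
  ∀ a b, dist μ (fun ω => (X ω, Y ω)) (a, b) = dist μ X a * dist μ Y b

/-- Markov chain U → Z → K. -/
def Markov {Ω A B C : Type*} [Fintype Ω] (μ : Ω → ℝ)
    (U : Ω → A) (Z : Ω → B) (K : Ω → C) : Prop :=
  ∀ u z k, dist μ (fun ω => (U ω, Z ω, K ω)) (u, z, k) * dist μ Z z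
    = dist μ (fun ω => (U ω, Z ω)) (u, z) * dist μ (fun ω => (Z ω, K ω)) (z, k)

/-!
For fixed `x`, `k ↦ k + g(x)` is injective, so
`H(C̄, X̄, M) = H(K̃, X̄, M) = H(X̄) + H(K̃, M)` by independence. Subadditivity gives
`H(X̄, M) ≤ H(X̄) + H(M)`, hence `I(C̄; X̄ | M) ≤ H(C̄ | M) − H(K̃ | M)`, and
`H(C̄ | M) ≤ H(C̄) ≤ log N` since the uniform distribution maximises entropy
(Gibbs' inequality).
-/

lemma mul_log_sub_mul_log_le {p q : ℝ} (hp : 0 ≤ p) (hq : 0 ≤ q) (hpq : 0 < p → 0 < q) :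
    p * log q - p * log p ≤ q - p := by
  rcases hp.eq_or_lt with rfl | hp
  · simpa using hq
  have hq := hpq hp
  calc p * log q - p * log p = p * log (q / p) := by rw [log_div hq.ne' hp.ne']; ring
    _ ≤ p * (q / p - 1) := by gcongr; exact log_le_sub_one_of_pos (div_pos hq hp)
    _ = q - p := by field_simp

theorem sum_mul_log_le_sum_mul_log {ι : Type*} [Fintype ι] {p q : ι → ℝ}
    (hp : ∀ i, 0 ≤ p i) (hq : ∀ i, 0 ≤ q i) (hsum : ∑ i, q i ≤ ∑ i, p i)
    (hpq : ∀ i, 0 < p i → 0 < q i) :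
    ∑ i, p i * log (q i) ≤ ∑ i, p i * log (p i) := by
  have h := Finset.sum_le_sum (s := Finset.univ) fun i _ =>
    mul_log_sub_mul_log_le (hp i) (hq i) (hpq i)
  simp only [Finset.sum_sub_distrib] at h
  linarith

section Entropy

variable {Ω A B : Type*} [Fintype Ω] {μ : Ω → ℝ}

lemma ent_eq_sum_negMulLog [Fintype A] (X : Ω → A) :
    ent μ X = ∑ a, negMulLog (_root_.dist μ X a) := by
  simp [ent, negMulLog, Finset.sum_neg_distrib]

lemma sum_dist_pair_right [Fintype B] (X : Ω → A) (Y : Ω → B) (a : A) :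
    ∑ b, _root_.dist μ (fun ω => (X ω, Y ω)) (a, b) = _root_.dist μ X a := by
  unfold _root_.dist pr
  rw [Finset.sum_comm]
  refine Finset.sum_congr rfl fun ω _ => ?_
  by_cases h : X ω = a <;> simp [Prod.ext_iff, h]

lemma sum_dist_pair_left [Fintype A] (X : Ω → A) (Y : Ω → B) (b : B) :
    ∑ a, _root_.dist μ (fun ω => (X ω, Y ω)) (a, b) = _root_.dist μ Y b := by
  unfold _root_.dist pr
  rw [Finset.sum_comm]
  refine Finset.sum_congr rfl fun ω _ => ?_
  by_cases h : Y ω = b <;> simp [Prod.ext_iff, h]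

lemma sum_dist_pair_mul_left [Fintype A] [Fintype B] (X : Ω → A) (Y : Ω → B) (f : A → ℝ) :
    ∑ ab, _root_.dist μ (fun ω => (X ω, Y ω)) ab * f ab.1 = ∑ a, _root_.dist μ X a * f a := by
  simp only [Fintype.sum_prod_type, ← Finset.sum_mul, sum_dist_pair_right]

lemma sum_dist_pair_mul_right [Fintype A] [Fintype B] (X : Ω → A) (Y : Ω → B) (f : B → ℝ) :
    ∑ ab, _root_.dist μ (fun ω => (X ω, Y ω)) ab * f ab.2 = ∑ b, _root_.dist μ Y b * f b := by
  simp only [Fintype.sum_prod_type_right, ← Finset.sum_mul, sum_dist_pair_left]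

lemma dist_comp_of_injective {f : A → B} (hf : Function.Injective f) (X : Ω → A) (a : A) :
    _root_.dist μ (fun ω => f (X ω)) (f a) = _root_.dist μ X a := by
  simp only [_root_.dist, pr, hf.eq_iff]

lemma dist_comp_eq_zero_of_notMem_range (f : A → B) (X : Ω → A) {b : B}
    (hb : b ∉ Set.range f) : _root_.dist μ (fun ω => f (X ω)) b = 0 :=
  Finset.sum_eq_zero fun ω _ => if_neg fun h => hb ⟨X ω, h⟩

theorem ent_comp_of_injective [Fintype A] [Fintype B] {f : A → B} (hf : Function.Injective f)
    (X : Ω → A) : ent μ (fun ω => f (X ω)) = ent μ X := by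
  rw [ent_eq_sum_negMulLog, ent_eq_sum_negMulLog]
  refine (Fintype.sum_of_injective f hf _ _ (fun b hb => ?_) fun a => ?_).symm
  · rw [dist_comp_eq_zero_of_notMem_range f X hb, negMulLog_zero]
  · rw [dist_comp_of_injective hf]

lemma ent_pair_left_comm {C : Type*} [Fintype A] [Fintype B] [Fintype C]
    (X : Ω → A) (Y : Ω → B) (Z : Ω → C) :
    ent μ (fun ω => (X ω, Y ω, Z ω)) = ent μ (fun ω => (Y ω, X ω, Z ω)) := by
  refine (ent_comp_of_injective (f := fun p : A × B × C => (p.2.1, p.1, p.2.2)) ?_ _).symm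
  rintro ⟨a, b, c⟩ ⟨a', b', c'⟩ h
  simp_all [Prod.ext_iff]

lemma ent_add_comp_pair {G : Type*} [Fintype G] [Fintype B] [Add G] [IsRightCancelAdd G]
    (K : Ω → G) (Z : Ω → B) (f : B → G) :
    ent μ (fun ω => (K ω + f (Z ω), Z ω)) = ent μ (fun ω => (K ω, Z ω)) := by
  refine ent_comp_of_injective (f := fun p : G × B => (p.1 + f p.2, p.2)) ?_
    fun ω => (K ω, Z ω)
  rintro ⟨k, z⟩ ⟨k', z'⟩ h
  simp only [Prod.mk.injEq] at h
  obtain ⟨hk, rfl⟩ := h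
  simpa using hk

namespace IsPmf

variable (hμ : IsPmf μ)
include hμ

lemma dist_nonneg (X : Ω → A) (a : A) : 0 ≤ _root_.dist μ X a :=
  Finset.sum_nonneg fun ω _ => by split <;> simp [hμ.1 ω]

lemma sum_dist [Fintype A] (X : Ω → A) : ∑ a, _root_.dist μ X a = 1 := by
  unfold _root_.dist pr
  rw [Finset.sum_comm, ← hμ.2]
  simp

lemma dist_pair_le_left [Fintype B] (X : Ω → A) (Y : Ω → B) (a : A) (b : B) :
    _root_.dist μ (fun ω => (X ω, Y ω)) (a, b) ≤ _root_.dist μ X a := by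
  rw [← sum_dist_pair_right X Y a]
  exact Finset.single_le_sum (f := fun b => _root_.dist μ (fun ω => (X ω, Y ω)) (a, b))
    (fun _ _ => hμ.dist_nonneg _ _) (Finset.mem_univ b)

lemma dist_pair_le_right [Fintype A] (X : Ω → A) (Y : Ω → B) (a : A) (b : B) :
    _root_.dist μ (fun ω => (X ω, Y ω)) (a, b) ≤ _root_.dist μ Y b := by
  rw [← sum_dist_pair_left X Y b]
  exact Finset.single_le_sum (f := fun a => _root_.dist μ (fun ω => (X ω, Y ω)) (a, b))
    (fun _ _ => hμ.dist_nonneg _ _) (Finset.mem_univ a)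

theorem ent_le_log_card [Fintype A] (X : Ω → A) : ent μ X ≤ log (Fintype.card A) := by
  have hsum : ∑ _a : A, (Fintype.card A : ℝ)⁻¹ ≤ ∑ a, _root_.dist μ X a := by
    rw [hμ.sum_dist, Finset.sum_const, Finset.card_univ, nsmul_eq_mul]
    exact mul_inv_le_one
  have hgibbs := sum_mul_log_le_sum_mul_log (hμ.dist_nonneg X) (fun _ => by positivity) hsum
    fun a _ => inv_pos.2 (Nat.cast_pos.2 (Fintype.card_pos_iff.2 ⟨a⟩))
  rw [← Finset.sum_mul, hμ.sum_dist, log_inv, one_mul] at hgibbs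
  rw [ent]
  linarith

theorem ent_pair_le_add [Fintype A] [Fintype B] (X : Ω → A) (Y : Ω → B) :
    ent μ (fun ω => (X ω, Y ω)) ≤ ent μ X + ent μ Y := by
  have hpos : ∀ ab : A × B, 0 < _root_.dist μ (fun ω => (X ω, Y ω)) ab →
      0 < _root_.dist μ X ab.1 * _root_.dist μ Y ab.2 := fun ab h =>
    mul_pos (h.trans_le (hμ.dist_pair_le_left X Y _ _)) (h.trans_le (hμ.dist_pair_le_right X Y _ _))
  have hsum : ∑ ab : A × B, _root_.dist μ X ab.1 * _root_.dist μ Y ab.2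
      ≤ ∑ ab, _root_.dist μ (fun ω => (X ω, Y ω)) ab := by
    simp only [hμ.sum_dist, Fintype.sum_prod_type, ← Finset.mul_sum, mul_one, le_refl]
  have hlog : ∀ ab : A × B,
      _root_.dist μ (fun ω => (X ω, Y ω)) ab * log (_root_.dist μ X ab.1 * _root_.dist μ Y ab.2)
        = _root_.dist μ (fun ω => (X ω, Y ω)) ab * log (_root_.dist μ X ab.1)
          + _root_.dist μ (fun ω => (X ω, Y ω)) ab * log (_root_.dist μ Y ab.2) := by
    intro ab
    rcases (hμ.dist_nonneg _ ab).eq_or_lt with h | h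
    · rw [← h]; ring
    · have hQ := (hpos ab h).ne'
      rw [log_mul (left_ne_zero_of_mul hQ) (right_ne_zero_of_mul hQ), mul_add]
  have hgibbs := sum_mul_log_le_sum_mul_log (hμ.dist_nonneg _)
    (fun _ => mul_nonneg (hμ.dist_nonneg X _) (hμ.dist_nonneg Y _)) hsum hpos
  rw [Finset.sum_congr rfl fun ab _ => hlog ab, Finset.sum_add_distrib,
    sum_dist_pair_mul_left X Y fun a => log (_root_.dist μ X a),
    sum_dist_pair_mul_right X Y fun b => log (_root_.dist μ Y b)] at hgibbs
  simp only [ent]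
  linarith

theorem ent_pair_eq_add_of_indep [Fintype A] [Fintype B] {X : Ω → A} {Y : Ω → B}
    (h : Indep μ X Y) : ent μ (fun ω => (X ω, Y ω)) = ent μ X + ent μ Y := by
  unfold Indep at h
  simp only [ent_eq_sum_negMulLog, Fintype.sum_prod_type, h, negMulLog_mul,
    Finset.sum_add_distrib, ← Finset.mul_sum, ← Finset.sum_mul, hμ.sum_dist, one_mul]

theorem condEnt_le_log_card [Fintype A] [Fintype B] (X : Ω → A) (Y : Ω → B) :
    condEnt μ X Y ≤ log (Fintype.card A) := by
  rw [condEnt]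
  linarith [hμ.ent_pair_le_add X Y, hμ.ent_le_log_card X]

end IsPmf

end Entropy

/-- Lemma 2: If `C̄ = K̃ ⊕ g(X̄)` in a finite abelian group `G` of size
`N`, with `X̄` independent of `(K̃, M)`, then `I(C̄; X̄ | M) ≤ log N − H(K̃ | M)`. -/
theorem stmt12 {Ω G ℳ 𝒳 : Type*} [Fintype Ω] [Fintype G] [AddCommGroup G]
    [Fintype ℳ] [Fintype 𝒳]
    (μ : Ω → ℝ) (hμ : IsPmf μ)
    (Kt : Ω → G) (M : Ω → ℳ) (Xb : Ω → 𝒳) (g : 𝒳 → G)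
    (hind : Indep μ Xb (fun ω => (Kt ω, M ω))) :
    condMutInfo μ (fun ω => Kt ω + g (Xb ω)) Xb M
      ≤ Real.log (Fintype.card G) - condEnt μ Kt M := by
  have hjoint : ent μ (fun ω => (Kt ω + g (Xb ω), Xb ω, M ω))
      = ent μ Xb + ent μ (fun ω => (Kt ω, M ω)) := by
    rw [ent_add_comp_pair Kt (fun ω => (Xb ω, M ω)) fun p => g p.1, ent_pair_left_comm,
      hμ.ent_pair_eq_add_of_indep hind]
  have hXM := hμ.ent_pair_le_add Xb M
  have hCM := hμ.condEnt_le_log_card (fun ω => Kt ω + g (Xb ω)) M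
  simp only [condMutInfo, condEnt] at hCM ⊢
  linarith
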